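/- arXiv:2111.01221 — 4 statements merged into one kernel-verified Lean document; each statement's English description precedes it below -/
import Mathlib

section
/- Let V = {v₁, ..., v_n} be vectors in a normed vector space, and let V' ⊂ V with |V'| < |V|/2. Let g be any geometric median of V, i.e., a minimizer of z ↦ ∑_{v∈V} ‖z - v‖. Then ‖g‖² ≤ C_α² · (∑_{v∉V'} ‖v‖²)/(|V| - |V'|), where α = |V'|/|V| and C_α = (2 - 2α)/(1 - 2α). -/
/-- Robustness of the geometric median (Lemma 1): if `V' ⊂ V` with `|V'| < |V|/2`,
then any geometric median `g` of `V` satisfies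
`‖g‖² ≤ C_α² (∑_{v ∉ V'} ‖v‖²)/(|V| - |V'|)` with `α = |V'|/|V|`,
`C_α = (2 - 2α)/(1 - 2α)`. -/
theorem geomed_robust_bound {E : Type*} [NormedAddCommGroup E] [NormedSpace ℝ E]
    (n : ℕ) (v : Fin n → E) (S : Finset (Fin n)) (hS : 2 * S.card < n)
    (g : E) (hmed : ∀ z, ∑ i, ‖g - v i‖ ≤ ∑ i, ‖z - v i‖)
    (α Cα : ℝ) (hα : α = (S.card : ℝ) / n) (hCα : Cα = (2 - 2 * α) / (1 - 2 * α)) :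
    ‖g‖ ^ 2 ≤ Cα ^ 2 * (∑ i ∈ Sᶜ, ‖v i‖ ^ 2) / ((n : ℝ) - S.card) := by
  have hsn : S.card < n := by omega
  have hcompl : (Sᶜ : Finset (Fin n)).card = n - S.card := by
    simp [Finset.card_compl]
  have hcomplR : ((Sᶜ : Finset (Fin n)).card : ℝ) = (n : ℝ) - S.card := by
    rw [hcompl]; push_cast [Nat.cast_sub hsn.le]; ring
  set s : ℝ := (S.card : ℝ) with hsdef
  have hsR : 2 * s < n := by rw [hsdef]; exact_mod_cast hS
  have hs0 : 0 ≤ s := by positivity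
  set A := ∑ i ∈ Sᶜ, ‖v i‖ with hAdef
  set B := ∑ i ∈ Sᶜ, ‖v i‖ ^ 2 with hBdef
  have hA0 : 0 ≤ A := Finset.sum_nonneg fun i _ => norm_nonneg _
  have hB0 : 0 ≤ B := Finset.sum_nonneg fun i _ => by positivity
  -- Step 1: (n - 2s) ‖g‖ ≤ 2 A
  have key : ((n : ℝ) - 2 * s) * ‖g‖ ≤ 2 * A := by
    have h0 := hmed 0
    simp only [zero_sub, norm_neg] at h0
    have h1 : ∑ i ∈ Sᶜ, (‖g‖ - ‖v i‖) ≤ ∑ i ∈ Sᶜ, ‖g - v i‖ :=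
      Finset.sum_le_sum fun i _ => norm_sub_norm_le _ _
    have h2 : ∑ i ∈ S, (‖v i‖ - ‖g‖) ≤ ∑ i ∈ S, ‖g - v i‖ :=
      Finset.sum_le_sum fun i _ => by
        rw [norm_sub_rev]; exact norm_sub_norm_le _ _
    have hsplit : ∑ i ∈ S, ‖g - v i‖ + ∑ i ∈ Sᶜ, ‖g - v i‖ = ∑ i, ‖g - v i‖ :=
      Finset.sum_add_sum_compl S _
    have hsplit2 : ∑ i ∈ S, ‖v i‖ + A = ∑ i, ‖v i‖ :=
      Finset.sum_add_sum_compl S _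
    have hsum1 : ∑ i ∈ Sᶜ, (‖g‖ - ‖v i‖) = ((n : ℝ) - s) * ‖g‖ - A := by
      rw [Finset.sum_sub_distrib, Finset.sum_const, hAdef, nsmul_eq_mul, hcomplR]
    have hsum2 : ∑ i ∈ S, (‖v i‖ - ‖g‖) = (∑ i ∈ S, ‖v i‖) - s * ‖g‖ := by
      rw [Finset.sum_sub_distrib, Finset.sum_const, nsmul_eq_mul]
    linarith
  -- Step 2: Cauchy–Schwarz
  have hCS : A ^ 2 ≤ ((n : ℝ) - s) * B := by
    have := sq_sum_le_card_mul_sum_sq (s := (Sᶜ : Finset (Fin n))) (f := fun i => ‖v i‖)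
    calc A ^ 2 ≤ ((Sᶜ : Finset (Fin n)).card : ℝ) * B := by exact_mod_cast this
      _ = ((n : ℝ) - s) * B := by rw [hcomplR]
  have hpos : (0:ℝ) < (n : ℝ) - 2 * s := by linarith
  have hpos2 : (0:ℝ) < (n : ℝ) - s := by linarith
  have hg2 : ‖g‖ ^ 2 * ((n : ℝ) - 2*s) ^ 2 ≤ 4 * (((n:ℝ) - s) * B) := by
    have hsq := mul_le_mul key key (mul_nonneg hpos.le (norm_nonneg g))
      (by linarith : (0:ℝ) ≤ 2 * A)
    nlinarith [hCS]
  have hn0 : (0:ℝ) < (n : ℝ) := by exact_mod_cast (by omega : 0 < n)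
  have hCval : Cα = 2 * ((n:ℝ) - s) / ((n:ℝ) - 2*s) := by
    rw [hCα, hα]
    field_simp
  rw [hCval, div_pow, div_mul_eq_mul_div, div_div,
    le_div_iff₀ (mul_pos (pow_pos hpos 2) hpos2)]
  nlinarith [mul_le_mul_of_nonneg_right hg2 hpos2.le]
end

section
/- Let V = {v₁,...,v_n} be vectors in a normed space and V' ⊂ V with |V'| < |V|/2. If ‖v‖ ≤ r for all v ∉ V', then any geometric median g of V satisfies ‖g‖ ≤ C_α · r, where α = |V'|/|V| and C_α = (2-2α)/(1-2α). -/
/-- If the honest vectors (those outside a strict minority subset `V'`) all have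
norm at most `r`, then any geometric median `g` of `V` satisfies `‖g‖ ≤ C_α r`,
with `α = |V'|/|V|` and `C_α = (2 - 2α)/(1 - 2α)`. -/
theorem geomed_norm_le {E : Type*} [NormedAddCommGroup E] [NormedSpace ℝ E]
    (n : ℕ) (v : Fin n → E) (S : Finset (Fin n)) (hS : 2 * S.card < n)
    (r : ℝ) (hr : ∀ i ∉ S, ‖v i‖ ≤ r)
    (g : E) (hmed : ∀ z, ∑ i, ‖g - v i‖ ≤ ∑ i, ‖z - v i‖)
    (α Cα : ℝ) (hα : α = (S.card : ℝ) / n) (hCα : Cα = (2 - 2 * α) / (1 - 2 * α)) :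
    ‖g‖ ≤ Cα * r := by
  classical
  set m := S.card with hm
  have hcompl : Sᶜ.card = n - m := by
    simp [Finset.card_compl, hm]
  have hmn : m ≤ n := le_of_lt (by omega)
  have hnR : (0:ℝ) < n := by exact_mod_cast (by omega : 0 < n)
  have h2m : (2:ℝ) * m < n := by exact_mod_cast hS
  set A := ∑ i ∈ Sᶜ, ‖v i‖ with hA
  set B := ∑ i ∈ S, ‖v i‖ with hB
  have hcast : ((n - m : ℕ) : ℝ) = (n:ℝ) - m := by
    push_cast [hmn]; ring
  have h1 : ∑ i, ‖g - v i‖ ≤ B + A := by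
    have := hmed 0
    simpa [zero_sub, norm_neg, ← Finset.sum_add_sum_compl S fun i => ‖v i‖] using this
  have hAr : A ≤ ((n:ℝ) - m) * r := by
    rw [hA, ← hcast, ← hcompl]
    have := Finset.sum_le_card_nsmul Sᶜ (fun i => ‖v i‖) r
      (fun i hi => hr i (Finset.mem_compl.mp hi))
    simpa [nsmul_eq_mul] using this
  have h2 : ((n:ℝ) - m) * ‖g‖ - A + (B - (m:ℝ) * ‖g‖) ≤ ∑ i, ‖g - v i‖ := by
    rw [← Finset.sum_add_sum_compl S fun i => ‖g - v i‖]
    have hcLHS : ((n:ℝ) - m) * ‖g‖ - A = ∑ i ∈ Sᶜ, (‖g‖ - ‖v i‖) := by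
      rw [Finset.sum_sub_distrib, Finset.sum_const, hcompl, nsmul_eq_mul, hA, hcast]
    have hsLHS : B - (m:ℝ) * ‖g‖ = ∑ i ∈ S, (‖v i‖ - ‖g‖) := by
      rw [Finset.sum_sub_distrib, Finset.sum_const, nsmul_eq_mul, hB, hm]
    rw [hcLHS, hsLHS, add_comm]
    gcongr with i hi i hi
    · calc ‖v i‖ - ‖g‖ ≤ ‖v i - g‖ := norm_sub_norm_le _ _
        _ = ‖g - v i‖ := norm_sub_rev _ _
    · exact norm_sub_norm_le g (v i)
  have key : ((n:ℝ) - 2 * m) * ‖g‖ ≤ 2 * ((n:ℝ) - m) * r := by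
    have := h2.trans h1
    nlinarith [hAr]
  have hden : (0:ℝ) < (n:ℝ) - 2 * m := by linarith
  have h1ne : (1:ℝ) - 2 * ((m:ℝ)/n) ≠ 0 := by
    have : (1:ℝ) - 2 * ((m:ℝ)/n) = ((n:ℝ) - 2*m)/n := by field_simp
    rw [this]
    positivity
  have hC : Cα = (2 * ((n:ℝ) - m)) / ((n:ℝ) - 2 * m) := by
    have e1 : (1:ℝ) - 2 * ((m:ℝ)/n) = ((n:ℝ) - 2*m)/n := by field_simp
    have e2 : (2:ℝ) - 2 * ((m:ℝ)/n) = (2 * ((n:ℝ) - m))/n := by field_simp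
    rw [hCα, hα, e1, e2]
    rw [div_div_div_comm, div_self hnR.ne', div_one]
  have hr0 : 0 ≤ r := by
    have hpos : 0 < Sᶜ.card := by rw [hcompl]; omega
    obtain ⟨i, hi⟩ := Finset.card_pos.mp hpos
    exact (norm_nonneg _).trans (hr i (Finset.mem_compl.mp hi))
  rw [hC, div_mul_eq_mul_div, le_div_iff₀ hden]
  nlinarith [key]
end

section
/- Suppose E‖w_{t+1} - w_t + η f'(w_t)‖² ≤ C²η²Δ for all t, f is μ-strongly convex with L-Lipschitz gradient and minimizer w*, and 0 < η < μ/(2L²). Then δ_{t+1} ≤ (1-ημ)δ_t + (2/(ημ))C²η²Δ, where δ_t = E‖w_t - w*‖². -/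
open MeasureTheory RealInnerProductSpace

/-!
By strong monotonicity of `f'` and its Lipschitz bound at `w*`, the exact gradient step
`x ↦ x - η f'(x)` multiplies `‖x - w*‖²` by at most `1 - 2ημ + η²L²`. The iterate differs from
this step by the aggregation error `e`, which the Peter–Paul inequality
`‖a + b‖² ≤ ‖a‖²/(1 - γ) + ‖b‖²/γ` with `γ = ημ/2` separates off; the step-size condition gives
`(1 - 2ημ + η²L²)/(1 - ημ/2) ≤ 1 - ημ`. Integrating this pointwise bound gives the claim.
-/

section GradientStep

variable {E : Type*} [NormedAddCommGroup E] [InnerProductSpace ℝ E]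

theorem mul_norm_sub_sq_le_inner_of_strongConvex {f : E → ℝ} {f' : E → E} {μ : ℝ}
    (hsc : ∀ x y, f x ≥ f y + ⟪f' y, x - y⟫ + μ / 2 * ‖x - y‖ ^ 2) (x y : E) :
    μ * ‖x - y‖ ^ 2 ≤ ⟪f' x - f' y, x - y⟫ := by
  have hxy := hsc x y
  have hyx := hsc y x
  rw [← neg_sub x y, inner_neg_right, norm_neg] at hyx
  rw [inner_sub_left]
  linarith

theorem le_of_strongMonotone_of_lipschitz [Nontrivial E] {f' : E → E} {μ L : ℝ}
    (hmono : ∀ x y, μ * ‖x - y‖ ^ 2 ≤ ⟪f' x - f' y, x - y⟫)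
    (hlip : ∀ x y, ‖f' x - f' y‖ ≤ L * ‖x - y‖) : μ ≤ L := by
  obtain ⟨v, hv⟩ := exists_ne (0 : E)
  have hv_pos : 0 < ‖v‖ ^ 2 := by positivity
  have hle : μ * ‖v‖ ^ 2 ≤ L * ‖v‖ ^ 2 := calc
    μ * ‖v‖ ^ 2 = μ * ‖v - 0‖ ^ 2 := by rw [sub_zero]
    _ ≤ ⟪f' v - f' 0, v - 0⟫ := hmono v 0
    _ ≤ ‖f' v - f' 0‖ * ‖v - 0‖ := real_inner_le_norm _ _
    _ ≤ L * ‖v - 0‖ * ‖v - 0‖ := by gcongr; exact hlip v 0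
    _ = L * ‖v‖ ^ 2 := by rw [sub_zero]; ring
  exact le_of_mul_le_mul_right hle hv_pos

theorem norm_sub_smul_sq_le {v g : E} {η μ L : ℝ} (hη : 0 ≤ η)
    (hmono : μ * ‖v‖ ^ 2 ≤ ⟪g, v⟫) (hlip : ‖g‖ ≤ L * ‖v‖) :
    ‖v - η • g‖ ^ 2 ≤ (1 - 2 * (η * μ) + η ^ 2 * L ^ 2) * ‖v‖ ^ 2 := by
  have hg_sq : ‖g‖ ^ 2 ≤ L ^ 2 * ‖v‖ ^ 2 := by
    rw [← mul_pow]; exact pow_le_pow_left₀ (norm_nonneg g) hlip 2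
  rw [norm_sub_sq_real, real_inner_smul_right, norm_smul, mul_pow, Real.norm_eq_abs, sq_abs,
    real_inner_comm]
  nlinarith [mul_le_mul_of_nonneg_left hmono hη, mul_le_mul_of_nonneg_left hg_sq (sq_nonneg η)]

-- The two sides differ by `‖γ • a - (1 - γ) • b‖² / (γ (1 - γ))`.
theorem norm_add_sq_le_div_add_div (a b : E) {γ : ℝ} (hγ₀ : 0 < γ) (hγ₁ : γ < 1) :
    ‖a + b‖ ^ 2 ≤ ‖a‖ ^ 2 / (1 - γ) + ‖b‖ ^ 2 / γ := by
  have h1γ : 0 < 1 - γ := sub_pos.mpr hγ₁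
  have hsq := sq_nonneg ‖γ • a - (1 - γ) • b‖
  rw [norm_sub_sq_real, norm_smul, norm_smul, real_inner_smul_left, real_inner_smul_right,
    Real.norm_of_nonneg hγ₀.le, Real.norm_of_nonneg h1γ.le] at hsq
  rw [div_add_div _ _ h1γ.ne' hγ₀.ne', le_div_iff₀ (mul_pos h1γ hγ₀), norm_add_sq_real]
  nlinarith

theorem norm_gradient_step_add_sub_sq_le {f' : E → E} {wstar x e : E} {η μ L : ℝ}
    (hμ : 0 < μ) (hmono : ∀ x y, μ * ‖x - y‖ ^ 2 ≤ ⟪f' x - f' y, x - y⟫)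
    (hlip : ∀ x y, ‖f' x - f' y‖ ≤ L * ‖x - y‖) (hcrit : f' wstar = 0)
    (hη : 0 < η) (hηlt : η < μ / (2 * L ^ 2)) :
    ‖x - η • f' x + e - wstar‖ ^ 2 ≤
      (1 - η * μ) * ‖x - wstar‖ ^ 2 + 2 / (η * μ) * ‖e‖ ^ 2 := by
  rcases subsingleton_or_nontrivial E with _ | _
  · have hzero (v : E) : ‖v‖ = 0 := by rw [Subsingleton.elim v 0, norm_zero]
    simp [hzero]
  have hμL : μ ≤ L := le_of_strongMonotone_of_lipschitz hmono hlip
  have hL : 0 < L := hμ.trans_le hμL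
  set s := η * μ
  have hs_pos : 0 < s := mul_pos hη hμ
  have hηL : 2 * η ^ 2 * L ^ 2 < s := by
    have := (lt_div_iff₀ (by positivity)).mp hηlt
    nlinarith
  have hs_lt : s < 1 := by nlinarith [mul_le_mul_of_nonneg_left hμL hη.le]
  have hρ : 1 - 2 * s + η ^ 2 * L ^ 2 ≤ (1 - s) * (1 - s / 2) := by nlinarith
  have hcontr := norm_sub_smul_sq_le hη.le (v := x - wstar) (g := f' x)
    (by simpa [hcrit] using hmono x wstar) (by simpa [hcrit] using hlip x wstar)
  calc ‖x - η • f' x + e - wstar‖ ^ 2 = ‖(x - wstar - η • f' x) + e‖ ^ 2 := by congr 2; abel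
    _ ≤ ‖x - wstar - η • f' x‖ ^ 2 / (1 - s / 2) + ‖e‖ ^ 2 / (s / 2) :=
      norm_add_sq_le_div_add_div _ _ (by positivity) (by linarith)
    _ ≤ (1 - 2 * s + η ^ 2 * L ^ 2) * ‖x - wstar‖ ^ 2 / (1 - s / 2) + ‖e‖ ^ 2 / (s / 2) := by
      gcongr
      linarith
    _ ≤ (1 - s) * ‖x - wstar‖ ^ 2 + 2 / s * ‖e‖ ^ 2 := by
      refine add_le_add ?_ (le_of_eq (by ring))
      rw [div_le_iff₀ (by linarith)]
      nlinarith [mul_le_mul_of_nonneg_right hρ (sq_nonneg ‖x - wstar‖)]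

end GradientStep

theorem one_step_descent_general {dim : ℕ} {Ω : Type*} [MeasurableSpace Ω]
    (ν : Measure Ω)
    (f : EuclideanSpace ℝ (Fin dim) → ℝ)
    (f' : EuclideanSpace ℝ (Fin dim) → EuclideanSpace ℝ (Fin dim))
    (wstar : EuclideanSpace ℝ (Fin dim)) (w : ℕ → Ω → EuclideanSpace ℝ (Fin dim))
    (η μ L C Δ : ℝ)
    (hμ : 0 < μ)
    (hsc : ∀ x y, f x ≥ f y + ⟪f' y, x - y⟫ + μ / 2 * ‖x - y‖ ^ 2)
    (hlip : ∀ x y, ‖f' x - f' y‖ ≤ L * ‖x - y‖)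
    (hcrit : f' wstar = 0)
    (hη : 0 < η) (hηlt : η < μ / (2 * L ^ 2))
    (hInt1 : ∀ t, Integrable (fun ω => ‖w t ω - wstar‖ ^ 2) ν)
    (hInt3 : ∀ t, Integrable (fun ω => ‖w (t + 1) ω - w t ω + η • f' (w t ω)‖ ^ 2) ν)
    (hstep : ∀ t, ∫ ω, ‖w (t + 1) ω - w t ω + η • f' (w t ω)‖ ^ 2 ∂ν ≤ C ^ 2 * η ^ 2 * Δ) :
    ∀ t, ∫ ω, ‖w (t + 1) ω - wstar‖ ^ 2 ∂ν ≤
      (1 - η * μ) * ∫ ω, ‖w t ω - wstar‖ ^ 2 ∂ν + 2 / (η * μ) * C ^ 2 * η ^ 2 * Δ := by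
  intro t
  have hmono := mul_norm_sub_sq_le_inner_of_strongConvex hsc
  have hpointwise (ω : Ω) : ‖w (t + 1) ω - wstar‖ ^ 2 ≤ (1 - η * μ) * ‖w t ω - wstar‖ ^ 2 +
      2 / (η * μ) * ‖w (t + 1) ω - w t ω + η • f' (w t ω)‖ ^ 2 := by
    have h := norm_gradient_step_add_sub_sq_le (x := w t ω)
      (e := w (t + 1) ω - w t ω + η • f' (w t ω)) hμ hmono hlip hcrit hη hηlt
    rwa [show w t ω - η • f' (w t ω) + (w (t + 1) ω - w t ω + η • f' (w t ω)) - wstar =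
      w (t + 1) ω - wstar by abel] at h
  have hInt := ((hInt1 t).const_mul (1 - η * μ)).add ((hInt3 t).const_mul (2 / (η * μ)))
  calc ∫ ω, ‖w (t + 1) ω - wstar‖ ^ 2 ∂ν
      ≤ ∫ ω, (1 - η * μ) * ‖w t ω - wstar‖ ^ 2 +
          2 / (η * μ) * ‖w (t + 1) ω - w t ω + η • f' (w t ω)‖ ^ 2 ∂ν :=
        integral_mono (hInt1 (t + 1)) hInt hpointwise
    _ = (1 - η * μ) * ∫ ω, ‖w t ω - wstar‖ ^ 2 ∂ν +
          2 / (η * μ) * ∫ ω, ‖w (t + 1) ω - w t ω + η • f' (w t ω)‖ ^ 2 ∂ν := by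
        rw [integral_add ((hInt1 t).const_mul _) ((hInt3 t).const_mul _), integral_const_mul,
          integral_const_mul]
    _ ≤ (1 - η * μ) * ∫ ω, ‖w t ω - wstar‖ ^ 2 ∂ν + 2 / (η * μ) * (C ^ 2 * η ^ 2 * Δ) := by
        gcongr
        exact hstep t
    _ = _ := by ring

/-- One-step descent inequality: if the aggregation error satisfies
`E‖w_{t+1} - w_t + η f'(w_t)‖² ≤ C²η²Δ`, `f` is `μ`-strongly convex with
`L`-Lipschitz gradient, `f'(w*) = 0`, and `0 < η < μ/(2L²)`, then
`δ_{t+1} ≤ (1-ημ)δ_t + (2/(ημ))C²η²Δ` where `δ_t = E‖w_t - w*‖²`. -/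
theorem one_step_descent {dim : ℕ} {Ω : Type*} [MeasurableSpace Ω]
    (ν : Measure Ω) [IsProbabilityMeasure ν]
    (f : EuclideanSpace ℝ (Fin dim) → ℝ)
    (f' : EuclideanSpace ℝ (Fin dim) → EuclideanSpace ℝ (Fin dim))
    (wstar : EuclideanSpace ℝ (Fin dim)) (w : ℕ → Ω → EuclideanSpace ℝ (Fin dim))
    (η μ L C Δ : ℝ)
    (hμ : 0 < μ) (hL : 0 < L) (hC : 0 < C) (hΔ : 0 < Δ)
    (hsc : ∀ x y, f x ≥ f y + ⟪f' y, x - y⟫ + μ / 2 * ‖x - y‖ ^ 2)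
    (hlip : ∀ x y, ‖f' x - f' y‖ ≤ L * ‖x - y‖)
    (hcrit : f' wstar = 0)
    (hη : 0 < η) (hηlt : η < μ / (2 * L ^ 2))
    (hInt1 : ∀ t, Integrable (fun ω => ‖w t ω - wstar‖ ^ 2) ν)
    (hInt2 : ∀ t, Integrable (fun ω => ‖w t ω - η • f' (w t ω) - wstar‖ ^ 2) ν)
    (hInt3 : ∀ t, Integrable (fun ω => ‖w (t + 1) ω - w t ω + η • f' (w t ω)‖ ^ 2) ν)
    (hstep : ∀ t, ∫ ω, ‖w (t + 1) ω - w t ω + η • f' (w t ω)‖ ^ 2 ∂ν ≤ C ^ 2 * η ^ 2 * Δ) :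
    ∀ t, ∫ ω, ‖w (t + 1) ω - wstar‖ ^ 2 ∂ν ≤
      (1 - η * μ) * ∫ ω, ‖w t ω - wstar‖ ^ 2 ∂ν + 2 / (η * μ) * C ^ 2 * η ^ 2 * Δ :=
  one_step_descent_general ν f f' wstar w η μ L C Δ hμ hsc hlip hcrit hη hηlt hInt1 hInt3 hstep
end

section
/- Let u₁, ..., u_G ∈ ℝ^p and suppose at most B < G/2 of them are arbitrary (Byzantine) while the remaining honest ones satisfy E‖u_g - v‖² ≤ E² for a common vector v. Then any geometric median g* of {u₁,...,u_G} satisfies E‖g* - v‖² ≤ C_α² E², where α = B/G and C_α = (2-2α)/(1-2α). -/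
open MeasureTheory

set_option maxHeartbeats 1000000 in
/-- Robust aggregation of group updates: if at most `B < G/2` of the updates
`u₁, …, u_G` are Byzantine and each honest update satisfies `E‖u_g - v‖² ≤ E²`,
then any (pointwise) geometric median `g*` of the updates satisfies
`E‖g* - v‖² ≤ C_α² E²`, where `α = B/G` and `C_α = (2-2α)/(1-2α)`. -/
theorem geomed_aggregation_error_bound {dim G B : ℕ} {Ω : Type*} [MeasurableSpace Ω]
    (ν : Measure Ω) [IsProbabilityMeasure ν]
    (u : Fin G → Ω → EuclideanSpace ℝ (Fin dim)) (gstar : Ω → EuclideanSpace ℝ (Fin dim))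
    (v : EuclideanSpace ℝ (Fin dim)) (Eb α Cα : ℝ) (S : Finset (Fin G))
    (hG : 0 < G) (hSB : S.card ≤ B) (hB : 2 * B < G)
    (hmed : ∀ ω z, ∑ i, ‖gstar ω - u i ω‖ ≤ ∑ i, ‖z - u i ω‖)
    (hhonest : ∀ i ∉ S, ∫ ω, ‖u i ω - v‖ ^ 2 ∂ν ≤ Eb ^ 2)
    (hhonestInt : ∀ i ∉ S, Integrable (fun ω => ‖u i ω - v‖ ^ 2) ν)
    (hgInt : Integrable (fun ω => ‖gstar ω - v‖ ^ 2) ν)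
    (hα : α = (B : ℝ) / G) (hCα : Cα = (2 - 2 * α) / (1 - 2 * α)) :
    ∫ ω, ‖gstar ω - v‖ ^ 2 ∂ν ≤ Cα ^ 2 * Eb ^ 2 := by
  -- notation
  set s : ℕ := S.card with hs
  have hsB : (s : ℝ) ≤ (B : ℝ) := by exact_mod_cast hSB
  have hBG : 2 * (B : ℝ) < (G : ℝ) := by exact_mod_cast hB
  have hcard_compl : (Sᶜ : Finset (Fin G)).card = G - s := by
    simp [Finset.card_compl, hs]
  have hsG : s ≤ G := (Finset.card_le_card (Finset.subset_univ S)).trans_eq (by simp)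
  have htR : ((Sᶜ : Finset (Fin G)).card : ℝ) = (G : ℝ) - s := by
    rw [hcard_compl]; push_cast [Nat.cast_sub hsG]; ring
  set c : ℝ := (G : ℝ) - 2 * s with hc
  have hcpos : 0 < c := by rw [hc]; nlinarith
  set K : ℝ := 4 * ((G : ℝ) - s) / c ^ 2 with hK
  have hKpos : 0 ≤ K := by
    apply div_nonneg _ (sq_nonneg c); nlinarith
  -- pointwise bound
  have key : ∀ ω, ‖gstar ω - v‖ ^ 2 ≤ K * ∑ i ∈ Sᶜ, ‖u i ω - v‖ ^ 2 := by
    intro ω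
    set r : ℝ := ‖gstar ω - v‖ with hr
    have hrnn : 0 ≤ r := norm_nonneg _
    -- step 1: c * r ≤ 2 * ∑
    have h1 : c * r ≤ 2 * ∑ i ∈ Sᶜ, ‖u i ω - v‖ := by
      have hm := hmed ω v
      have hsplit : ∀ f : Fin G → ℝ, ∑ i, f i = ∑ i ∈ S, f i + ∑ i ∈ Sᶜ, f i :=
        fun f => (Finset.sum_add_sum_compl S f).symm
      rw [hsplit, hsplit] at hm
      have hS1 : ∑ i ∈ S, (‖u i ω - v‖ - r) ≤ ∑ i ∈ S, ‖gstar ω - u i ω‖ := by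
        apply Finset.sum_le_sum
        intro i _
        have := norm_add_le (u i ω - gstar ω) (gstar ω - v)
        rw [sub_add_sub_cancel] at this
        have h2 : ‖u i ω - gstar ω‖ = ‖gstar ω - u i ω‖ := norm_sub_rev _ _
        linarith
      have hS2 : ∑ i ∈ Sᶜ, (r - ‖u i ω - v‖) ≤ ∑ i ∈ Sᶜ, ‖gstar ω - u i ω‖ := by
        apply Finset.sum_le_sum
        intro i _
        have := norm_sub_norm_le (gstar ω - v) (u i ω - v)
        have h2 : ‖gstar ω - v - (u i ω - v)‖ = ‖gstar ω - u i ω‖ := by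
          congr 1; abel
        rw [h2] at this
        linarith
      have hvrev : ∀ i, ‖v - u i ω‖ = ‖u i ω - v‖ := fun i => norm_sub_rev _ _
      simp only [hvrev] at hm
      rw [Finset.sum_sub_distrib, Finset.sum_const, nsmul_eq_mul] at hS1
      rw [Finset.sum_sub_distrib, Finset.sum_const, nsmul_eq_mul] at hS2
      rw [htR] at hS2
      have hsR : ((S.card : ℝ)) = (s : ℝ) := by rw [hs]
      rw [hsR] at hS1
      have := le_trans (add_le_add hS1 hS2) hm
      rw [hc]
      nlinarith
    -- step 2: Cauchy-Schwarz
    have h2 : (∑ i ∈ Sᶜ, ‖u i ω - v‖) ^ 2 ≤ ((G : ℝ) - s) * ∑ i ∈ Sᶜ, ‖u i ω - v‖ ^ 2 := by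
      have := sq_sum_le_card_mul_sum_sq (s := Sᶜ) (f := fun i => ‖u i ω - v‖)
      rwa [htR] at this
    have hsumnn : 0 ≤ ∑ i ∈ Sᶜ, ‖u i ω - v‖ := Finset.sum_nonneg fun i _ => norm_nonneg _
    have h3 : (c * r) ^ 2 ≤ (2 * ∑ i ∈ Sᶜ, ‖u i ω - v‖) ^ 2 := by
      apply sq_le_sq' _ h1
      nlinarith
    rw [hK]
    rw [div_mul_eq_mul_div, le_div_iff₀ (by positivity)]
    nlinarith
  -- integrate
  have hintsum : Integrable (fun ω => K * ∑ i ∈ Sᶜ, ‖u i ω - v‖ ^ 2) ν := by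
    apply Integrable.const_mul
    exact integrable_finset_sum _ fun i hi => hhonestInt i (Finset.mem_compl.mp hi)
  have hmono : ∫ ω, ‖gstar ω - v‖ ^ 2 ∂ν ≤ ∫ ω, K * ∑ i ∈ Sᶜ, ‖u i ω - v‖ ^ 2 ∂ν :=
    integral_mono hgInt hintsum key
  have heq : ∫ ω, K * ∑ i ∈ Sᶜ, ‖u i ω - v‖ ^ 2 ∂ν
      = K * ∑ i ∈ Sᶜ, ∫ ω, ‖u i ω - v‖ ^ 2 ∂ν := by
    rw [integral_const_mul, integral_finset_sum _ fun i hi => hhonestInt i (Finset.mem_compl.mp hi)]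
  have hsumle : ∑ i ∈ Sᶜ, ∫ ω, ‖u i ω - v‖ ^ 2 ∂ν ≤ ((G : ℝ) - s) * Eb ^ 2 := by
    calc ∑ i ∈ Sᶜ, ∫ ω, ‖u i ω - v‖ ^ 2 ∂ν ≤ ∑ i ∈ Sᶜ, Eb ^ 2 :=
          Finset.sum_le_sum fun i hi => hhonest i (Finset.mem_compl.mp hi)
      _ = ((G : ℝ) - s) * Eb ^ 2 := by rw [Finset.sum_const, nsmul_eq_mul, htR]
  have hfinal : K * (((G : ℝ) - s) * Eb ^ 2) ≤ Cα ^ 2 * Eb ^ 2 := by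
    rw [← mul_assoc]
    apply mul_le_mul_of_nonneg_right _ (sq_nonneg Eb)
    have hGpos : (0 : ℝ) < G := by exact_mod_cast hG
    have hne : (G : ℝ) ≠ 0 := ne_of_gt hGpos
    have hne2 : (G : ℝ) - 2 * B ≠ 0 := ne_of_gt (by linarith)
    have h1ne : 1 - 2 * ((B : ℝ) / G) ≠ 0 := by
      have h1 : 1 - 2 * ((B : ℝ) / G) = ((G : ℝ) - 2 * B) / G := by field_simp
      rw [h1]
      exact div_ne_zero hne2 hne
    have hCα' : Cα = (2 * (G : ℝ) - 2 * B) / ((G : ℝ) - 2 * B) := by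
      rw [hCα, hα]
      field_simp
    have hsGR : (s : ℝ) ≤ (G : ℝ) := by exact_mod_cast hsG
    have ha : (0 : ℝ) ≤ ((G : ℝ) - s) * ((G : ℝ) - 2 * B) :=
      mul_nonneg (by linarith) (by linarith)
    have hab : ((G : ℝ) - s) * ((G : ℝ) - 2 * B) ≤ ((G : ℝ) - B) * ((G : ℝ) - 2 * s) := by
      nlinarith [mul_le_mul_of_nonneg_right hsB hGpos.le]
    have hsq := mul_self_le_mul_self ha hab
    rw [hCα', hK, hc, div_pow, div_mul_eq_mul_div,
      div_le_div_iff₀ (pow_pos (by linarith : (0:ℝ) < (G : ℝ) - 2 * s) 2)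
        (pow_pos (by linarith : (0:ℝ) < (G : ℝ) - 2 * B) 2)]
    nlinarith [hsq]
  calc ∫ ω, ‖gstar ω - v‖ ^ 2 ∂ν ≤ K * ∑ i ∈ Sᶜ, ∫ ω, ‖u i ω - v‖ ^ 2 ∂ν := by
        rw [← heq]; exact hmono
    _ ≤ K * (((G : ℝ) - s) * Eb ^ 2) := mul_le_mul_of_nonneg_left hsumle hKpos
    _ ≤ Cα ^ 2 * Eb ^ 2 := hfinal
end
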